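/- arXiv:1609.01652 — 3 statements merged into one kernel-verified Lean document; each statement's English description precedes it below -/
import Mathlib

section
/- Let z ∈ ℂ^N be a unit vector, d a positive integer, and let g_{kp}, for k ∈ {1,...,d} and p ∈ {1,...,N}, be independent random variables each uniformly distributed on {1, −1, i, −i}. Define z' ∈ ℂ^d by (z')_k = (1/√d)·Σ_p g_{kp} z_p. Then E[‖z'‖⁴] = 1 + 1/d − (1/d)·Σ_p |z_p|⁴ ≤ 1 + 1/d. -/
/-!
For a row `g ∈ {1, i, -1, -i}^N` put `Y g = |∑ p, g_p z_p|²`, so that `‖z'‖² = (1/d) ∑_k Y g_k`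
with independent rows `g_k`. Averaging over one fourth root `g` at a time, the cross terms die
because `E g = E g² = 0`: the mean of `|g b + a|²` is `|a|² + |b|²` and that of `|g b + a|⁴` is
`|a|⁴ + 4|a|²|b|² + |b|⁴`. Induction on `N` gives `E Y = ∑ |z_p|²` and
`E Y² = 2 (∑ |z_p|²)² - ∑ |z_p|⁴`, and independence of the rows gives
`E (∑_k Y g_k)² = d E Y² + d (d - 1) (E Y)²`.
-/

open Complex
open scoped BigOperators

lemma Fintype.expect_pi_fin_succ {α M : Type*} [Fintype α] [AddCommMonoid M] [Module ℚ≥0 M]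
    {n : ℕ} (f : (Fin (n + 1) → α) → M) :
    𝔼 g, f g = 𝔼 x, 𝔼 g, f (Fin.cons x g) := by
  rw [← Finset.expect_product', Finset.univ_product_univ]
  exact (Fintype.expect_equiv (Fin.consEquiv fun _ => α) _ f fun _ => rfl).symm

lemma Complex.sum_fin_four_I_pow {M : Type*} [AddCommMonoid M] (f : ℂ → M) :
    ∑ k : Fin 4, f (I ^ (k : ℕ)) = f 1 + f I + f (-1) + f (-I) := by
  simp [Fin.sum_univ_four, pow_succ, add_assoc]

lemma Complex.expect_normSq_I_pow_mul_add (a b : ℂ) :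
    𝔼 k : Fin 4, normSq (I ^ (k : ℕ) * b + a) = normSq a + normSq b := by
  rw [Fintype.expect_eq_sum_div_card, sum_fin_four_I_pow (fun g => normSq (g * b + a))]
  simp [normSq_apply]
  ring

lemma Complex.expect_normSq_I_pow_mul_add_sq (a b : ℂ) :
    𝔼 k : Fin 4, normSq (I ^ (k : ℕ) * b + a) ^ 2
      = normSq a ^ 2 + 4 * normSq a * normSq b + normSq b ^ 2 := by
  rw [Fintype.expect_eq_sum_div_card, sum_fin_four_I_pow (fun g => normSq (g * b + a) ^ 2)]
  simp [normSq_apply]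
  ring

lemma Complex.expect_normSq_sum_I_pow_mul {N : ℕ} (z : Fin N → ℂ) :
    𝔼 g : Fin N → Fin 4, normSq (∑ p, I ^ (g p : ℕ) * z p) = ∑ p, normSq (z p) := by
  induction N with
  | zero => simp
  | succ n ih =>
    rw [Fintype.expect_pi_fin_succ, Finset.expect_comm]
    simp only [Fin.sum_univ_succ, Fin.cons_zero, Fin.cons_succ, expect_normSq_I_pow_mul_add,
      Finset.expect_add_distrib, ih, Fintype.expect_const, add_comm]

lemma Complex.expect_normSq_sum_I_pow_mul_sq {N : ℕ} (z : Fin N → ℂ) :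
    𝔼 g : Fin N → Fin 4, normSq (∑ p, I ^ (g p : ℕ) * z p) ^ 2
      = 2 * (∑ p, normSq (z p)) ^ 2 - ∑ p, normSq (z p) ^ 2 := by
  induction N with
  | zero => simp
  | succ n ih =>
    rw [Fintype.expect_pi_fin_succ, Finset.expect_comm]
    simp only [Fin.sum_univ_succ, Fin.cons_zero, Fin.cons_succ, expect_normSq_I_pow_mul_add_sq,
      Finset.expect_add_distrib, ← Finset.mul_expect, ← Finset.expect_mul, ih,
      expect_normSq_sum_I_pow_mul, Fintype.expect_const]
    ring

section

variable {R K : Type*} [Fintype R] [Nonempty R] [Field K] [CharZero K]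

lemma Fintype.expect_sum_comp (Y : R → K) (d : ℕ) :
    𝔼 H : Fin d → R, ∑ k, Y (H k) = d * 𝔼 r, Y r := by
  induction d with
  | zero => simp
  | succ n ih =>
    rw [Fintype.expect_pi_fin_succ]
    simp only [Fin.sum_univ_succ, Fin.cons_zero, Fin.cons_succ, Finset.expect_add_distrib, ih,
      Fintype.expect_const]
    push_cast
    ring

lemma Fintype.expect_sq_sum_comp (Y : R → K) (d : ℕ) :
    𝔼 H : Fin d → R, (∑ k, Y (H k)) ^ 2
      = d * 𝔼 r, Y r ^ 2 + d * (d - 1) * (𝔼 r, Y r) ^ 2 := by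
  induction d with
  | zero => simp
  | succ n ih =>
    rw [Fintype.expect_pi_fin_succ]
    simp only [Fin.sum_univ_succ, Fin.cons_zero, Fin.cons_succ, add_sq, Finset.expect_add_distrib,
      ← Finset.mul_expect, ← Finset.expect_mul, ih, expect_sum_comp, Fintype.expect_const]
    push_cast
    ring

end

/-- For a unit vector `z ∈ ℂ^N` and i.i.d. coefficients `g_{kp}`
uniform on the fourth roots of unity `{1, −1, i, −i}`, the projected vector
`z'_k = (1/√d)·Σ_p g_{kp} z_p` satisfies
`E[‖z'‖⁴] = 1 + 1/d − (1/d)·Σ_p |z_p|⁴ ≤ 1 + 1/d`. -/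
theorem stmt8 {N d : ℕ} (hd : 0 < d) (z : Fin N → ℂ)
    (hz : ∑ p, ‖z p‖ ^ 2 = 1) :
    (∑ G : Fin d × Fin N → Fin 4,
        (∑ k : Fin d,
          ‖((Real.sqrt d : ℂ))⁻¹ *
            ∑ p, Complex.I ^ ((G (k, p) : ℕ)) * z p‖ ^ 2) ^ 2)
        / (Fintype.card (Fin d × Fin N → Fin 4) : ℝ)
      = 1 + 1 / (d : ℝ) - (1 / (d : ℝ)) * ∑ p, ‖z p‖ ^ 4
    ∧ (1 : ℝ) + 1 / (d : ℝ) - (1 / (d : ℝ)) * ∑ p, ‖z p‖ ^ 4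
        ≤ 1 + 1 / (d : ℝ) := by
  refine ⟨?_, sub_le_self _ (by positivity)⟩
  have hz' : ∑ p, normSq (z p) = 1 := by simpa only [Complex.sq_norm] using hz
  have hscale (w : ℂ) : ‖((Real.sqrt d : ℂ))⁻¹ * w‖ ^ 2 = normSq w / d := by
    rw [Complex.sq_norm, map_mul, map_inv₀, normSq_ofReal, Real.mul_self_sqrt d.cast_nonneg,
      inv_mul_eq_div]
  have hfourth (p : Fin N) : ‖z p‖ ^ 4 = normSq (z p) ^ 2 := by rw [← Complex.sq_norm, ← pow_mul]
  have hcurry : 𝔼 G : Fin d × Fin N → Fin 4, (∑ k, normSq (∑ p, I ^ (G (k, p) : ℕ) * z p)) ^ 2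
      = 𝔼 H : Fin d → Fin N → Fin 4, (∑ k, normSq (∑ p, I ^ (H k p : ℕ) * z p)) ^ 2 :=
    Fintype.expect_equiv (Equiv.curry _ _ _) _ _ fun _ => rfl
  rw [← Fintype.expect_eq_sum_div_card]
  simp only [hscale, ← Finset.sum_div, div_pow, ← Finset.expect_div, hcurry]
  rw [Fintype.expect_sq_sum_comp fun g : Fin N → Fin 4 => normSq (∑ p, I ^ (g p : ℕ) * z p)]
  simp only [expect_normSq_sum_I_pow_mul, expect_normSq_sum_I_pow_mul_sq, hz', hfourth]
  field_simp
  ring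
end

section
/- Let A₁, ..., Aₙ be pairwise anticommuting observables on ℂ^d (Hermitian, Aᵢ² = Id, AᵢAⱼ + AⱼAᵢ = 0 for i≠j), and let |ψ⟩ = d^{−1/2} Σ_{i=1}^d |i⟩|i⟩ be the maximally entangled state on ℂ^d ⊗ ℂ^d. For i ≠ j define B_{ij} = ((−1)^{[j<i]} Aᵢᵀ + Aⱼᵀ)/√2, where [j<i] is 1 if j < i and 0 otherwise. Then each B_{ij} is an observable, and for every i < j: ⟨ψ| Aᵢ ⊗ B_{ij} |ψ⟩ = ⟨ψ| Aᵢ ⊗ B_{ji} |ψ⟩ = ⟨ψ| Aⱼ ⊗ B_{ij} |ψ⟩ = −⟨ψ| Aⱼ ⊗ B_{ji} |ψ⟩ = 1/√2. -/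
open Matrix Kronecker

/-! Against the maximally entangled state, `⟨ψ| M ⊗ N |ψ⟩ = tr (M Nᵀ) / d`. Writing `B i j` as the
transpose of `(ε Aᵢ + Aⱼ)/√2` with `ε = ±1`, every correlation becomes a combination of the
traces `tr (Aₖ Aₗ)`, which anticommutation and `Aₖ² = 1` force to equal `d δₖₗ`. That `B i j` is
an observable comes from `(X + Y)² = 2` for anticommuting involutions `X`, `Y`. -/

noncomputable def maxEntangled (ι : Type*) [Fintype ι] [DecidableEq ι] :
    EuclideanSpace ℂ (ι × ι) :=
  WithLp.toLp 2 fun p => if p.1 = p.2 then ((Real.sqrt (Fintype.card ι) : ℂ))⁻¹ else 0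

theorem inner_maxEntangled_kronecker {ι : Type*} [Fintype ι] [DecidableEq ι]
    (M N : Matrix ι ι ℂ) :
    inner ℂ (maxEntangled ι) (toEuclideanLin (M ⊗ₖ N) (maxEntangled ι)) =
      (Fintype.card ι : ℂ)⁻¹ * (M * Nᵀ).trace := by
  set s : ℂ := ((Real.sqrt (Fintype.card ι) : ℂ))⁻¹
  have hs : starRingEnd ℂ s * s = (Fintype.card ι : ℂ)⁻¹ := by
    rw [map_inv₀, Complex.conj_ofReal, ← mul_inv, ← Complex.ofReal_mul,
      Real.mul_self_sqrt (Nat.cast_nonneg _), Complex.ofReal_natCast]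
  simp only [maxEntangled, PiLp.inner_apply, toLpLin_apply, mulVec, dotProduct,
    kroneckerMap_apply, RCLike.inner_apply, Fintype.sum_prod_type]
  simp only [mul_ite, mul_zero, apply_ite (starRingEnd ℂ), map_zero, Finset.sum_ite_eq,
    Finset.mem_univ, if_true]
  rw [← hs, trace, Finset.mul_sum]
  refine Finset.sum_congr rfl fun a _ => ?_
  simp only [diag_apply, mul_apply, transpose_apply, Finset.mul_sum, Finset.sum_mul]
  exact Finset.sum_congr rfl fun b _ => by ring

theorem add_mul_self_of_anticomm {R : Type*} [Ring R] {X Y : R} (hX : X * X = 1)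
    (hY : Y * Y = 1) (hXY : X * Y + Y * X = 0) : (X + Y) * (X + Y) = 2 := by
  calc (X + Y) * (X + Y) = X * X + Y * Y + (X * Y + Y * X) := by noncomm_ring
    _ = 2 := by rw [hX, hY, hXY, add_zero, one_add_one_eq_two]

namespace Matrix

variable {n : Type*} [Fintype n]

theorem trace_mul_eq_zero_of_anticomm {R : Type*} [CommRing R] [NoZeroDivisors R] [CharZero R]
    {X Y : Matrix n n R} (hXY : X * Y + Y * X = 0) : (X * Y).trace = 0 := by
  have h := congrArg trace hXY
  rw [trace_add, trace_mul_comm Y X, trace_zero, ← two_mul] at h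
  exact (mul_eq_zero.1 h).resolve_left two_ne_zero

theorem trace_mul_of_anticomm_involutions {ι R : Type*} [DecidableEq ι] [DecidableEq n]
    [CommRing R] [NoZeroDivisors R] [CharZero R] {A : ι → Matrix n n R}
    (hsq : ∀ i, A i * A i = 1) (hac : ∀ i j, i ≠ j → A i * A j + A j * A i = 0) (i j : ι) :
    (A i * A j).trace = if i = j then (Fintype.card n : R) else 0 := by
  split_ifs with hij
  · rw [hij, hsq, trace_one]
  · exact trace_mul_eq_zero_of_anticomm (hac i j hij)

theorem inner_maxEntangled_kronecker_transpose_smul_add {ι : Type*} [DecidableEq n] [Nonempty n]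
    [DecidableEq ι] {A : ι → Matrix n n ℂ} (hsq : ∀ i, A i * A i = 1)
    (hac : ∀ i j, i ≠ j → A i * A j + A j * A i = 0) (c ε : ℂ) (i j k : ι) :
    inner ℂ (maxEntangled n) (toEuclideanLin (A k ⊗ₖ (c • (ε • A i + A j))ᵀ) (maxEntangled n)) =
      c * (ε * (if k = i then 1 else 0) + if k = j then 1 else 0) := by
  have hcard : (Fintype.card n : ℂ) ≠ 0 := Nat.cast_ne_zero.2 Fintype.card_ne_zero
  rw [inner_maxEntangled_kronecker, transpose_transpose, Matrix.mul_smul, mul_add,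
    Matrix.mul_smul, trace_smul, trace_add, trace_smul, trace_mul_of_anticomm_involutions hsq hac,
    trace_mul_of_anticomm_involutions hsq hac]
  simp only [smul_eq_mul]
  split_ifs <;> field_simp <;> ring

def IsObservable [DecidableEq n] (M : Matrix n n ℂ) : Prop :=
  M.IsHermitian ∧ M * M = 1

variable [DecidableEq n] {X Y : Matrix n n ℂ}

theorem IsObservable.transpose (hX : X.IsObservable) : Xᵀ.IsObservable :=
  ⟨hX.1.transpose, by rw [← transpose_mul, hX.2, transpose_one]⟩

theorem IsObservable.smul (hX : X.IsObservable) {ε : ℂ} (hε : IsSelfAdjoint ε)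
    (hε_sq : ε * ε = 1) : (ε • X).IsObservable :=
  ⟨hX.1.smul hε, by rw [smul_mul_smul_comm, hε_sq, hX.2, one_smul]⟩

theorem IsObservable.inv_sqrt_two_smul_add (hX : X.IsObservable) (hY : Y.IsObservable)
    (hXY : X * Y + Y * X = 0) : (((Real.sqrt 2 : ℂ))⁻¹ • (X + Y)).IsObservable := by
  have hc : ((Real.sqrt 2 : ℂ))⁻¹ * ((Real.sqrt 2 : ℂ))⁻¹ = 2⁻¹ := by
    rw [← mul_inv, ← Complex.ofReal_mul, Real.mul_self_sqrt zero_le_two, Complex.ofReal_ofNat]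
  have h2 : (2 : Matrix n n ℂ) = (2 : ℂ) • 1 := by rw [two_smul, one_add_one_eq_two]
  refine ⟨(hX.1.add hY.1).smul ?_, ?_⟩
  · rw [IsSelfAdjoint, star_inv₀, Complex.star_def, Complex.conj_ofReal]
  · rw [smul_mul_smul_comm, hc, add_mul_self_of_anticomm hX.2 hY.2 hXY, h2, smul_smul,
      inv_mul_cancel₀ two_ne_zero, one_smul]

end Matrix

theorem stmt18_general {n d : ℕ} (hd : 0 < d)
    (A : Fin n → Matrix (Fin d) (Fin d) ℂ)
    (hherm : ∀ i, (A i).IsHermitian) (hsq : ∀ i, A i * A i = 1)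
    (hac : ∀ i j, i ≠ j → A i * A j + A j * A i = 0)
    (ψ : EuclideanSpace ℂ (Fin d × Fin d))
    (hψ : ψ = (show EuclideanSpace ℂ (Fin d × Fin d) from WithLp.toLp 2
      fun (p : Fin d × Fin d) => if p.1 = p.2 then ((Real.sqrt d : ℂ))⁻¹ else 0))
    (B : Fin n → Fin n → Matrix (Fin d) (Fin d) ℂ)
    (hB : ∀ i j, i ≠ j → B i j = ((Real.sqrt 2 : ℂ))⁻¹ •
      ((if j < i then (-1 : ℂ) else 1) • (A i)ᵀ + (A j)ᵀ)) :
    (∀ i j, i ≠ j → (B i j).IsHermitian ∧ B i j * B i j = 1) ∧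
    (∀ i j, i < j →
      (inner ℂ ψ (Matrix.toEuclideanLin ((A i) ⊗ₖ (B i j)) ψ) : ℂ) = ((Real.sqrt 2 : ℂ))⁻¹ ∧
      (inner ℂ ψ (Matrix.toEuclideanLin ((A i) ⊗ₖ (B j i)) ψ) : ℂ) = ((Real.sqrt 2 : ℂ))⁻¹ ∧
      (inner ℂ ψ (Matrix.toEuclideanLin ((A j) ⊗ₖ (B i j)) ψ) : ℂ) = ((Real.sqrt 2 : ℂ))⁻¹ ∧
      (inner ℂ ψ (Matrix.toEuclideanLin ((A j) ⊗ₖ (B j i)) ψ) : ℂ) = -((Real.sqrt 2 : ℂ))⁻¹) := by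
  set ε : Fin n → Fin n → ℂ := fun i j => if j < i then -1 else 1 with hε
  have hBt : ∀ i j, i ≠ j → B i j = (((Real.sqrt 2 : ℂ))⁻¹ • (ε i j • A i + A j))ᵀ :=
    fun i j hij => by rw [hB i j hij, transpose_smul, transpose_add, transpose_smul]
  have hobs : ∀ i, (A i).IsObservable := fun i => ⟨hherm i, hsq i⟩
  have hψ' : ψ = maxEntangled (Fin d) := by rw [hψ, maxEntangled, Fintype.card_fin]
  have : Nonempty (Fin d) := ⟨⟨0, hd⟩⟩
  refine ⟨fun i j hij => ?_, fun i j hij => ?_⟩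
  · have hε_sa : IsSelfAdjoint (ε i j) := by simp only [hε]; split_ifs <;> simp [IsSelfAdjoint]
    have hε_sq : ε i j * ε i j = 1 := by simp only [hε]; split_ifs <;> norm_num
    have hanti : ε i j • A i * A j + A j * (ε i j • A i) = 0 := by
      rw [smul_mul_assoc, mul_smul_comm, ← smul_add, hac i j hij, smul_zero]
    rw [hBt i j hij]
    exact (((hobs i).smul hε_sa hε_sq).inv_sqrt_two_smul_add (hobs j) hanti).transpose
  · rw [hψ', hBt i j hij.ne, hBt j i hij.ne']
    simp only [inner_maxEntangled_kronecker_transpose_smul_add hsq hac]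
    simp [hε, hij, hij.ne, hij.ne', not_lt.2 hij.le]

/-- For pairwise anticommuting observables `A₁, ..., Aₙ` on
`ℂ^d`, the maximally entangled state `ψ`, and Bob's observables
`B_{ij} = ((−1)^{[j<i]} Aᵢᵀ + Aⱼᵀ)/√2`, each `B_{ij}` is an observable and
for `i < j` the correlations `⟨ψ|Aᵢ ⊗ B_{ij}|ψ⟩ = ⟨ψ|Aᵢ ⊗ B_{ji}|ψ⟩
= ⟨ψ|Aⱼ ⊗ B_{ij}|ψ⟩ = −⟨ψ|Aⱼ ⊗ B_{ji}|ψ⟩ = 1/√2`. -/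
theorem stmt18 {n d : ℕ} (hn : 2 ≤ n) (hd : 0 < d)
    (A : Fin n → Matrix (Fin d) (Fin d) ℂ)
    (hherm : ∀ i, (A i).IsHermitian) (hsq : ∀ i, A i * A i = 1)
    (hac : ∀ i j, i ≠ j → A i * A j + A j * A i = 0)
    (ψ : EuclideanSpace ℂ (Fin d × Fin d))
    (hψ : ψ = (show EuclideanSpace ℂ (Fin d × Fin d) from WithLp.toLp 2
      fun (p : Fin d × Fin d) => if p.1 = p.2 then ((Real.sqrt d : ℂ))⁻¹ else 0))
    (B : Fin n → Fin n → Matrix (Fin d) (Fin d) ℂ)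
    (hB : ∀ i j, i ≠ j → B i j = ((Real.sqrt 2 : ℂ))⁻¹ •
      ((if j < i then (-1 : ℂ) else 1) • (A i)ᵀ + (A j)ᵀ)) :
    (∀ i j, i ≠ j → (B i j).IsHermitian ∧ B i j * B i j = 1) ∧
    (∀ i j, i < j →
      (inner ℂ ψ (Matrix.toEuclideanLin ((A i) ⊗ₖ (B i j)) ψ) : ℂ) = ((Real.sqrt 2 : ℂ))⁻¹ ∧
      (inner ℂ ψ (Matrix.toEuclideanLin ((A i) ⊗ₖ (B j i)) ψ) : ℂ) = ((Real.sqrt 2 : ℂ))⁻¹ ∧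
      (inner ℂ ψ (Matrix.toEuclideanLin ((A j) ⊗ₖ (B i j)) ψ) : ℂ) = ((Real.sqrt 2 : ℂ))⁻¹ ∧
      (inner ℂ ψ (Matrix.toEuclideanLin ((A j) ⊗ₖ (B j i)) ψ) : ℂ) = -((Real.sqrt 2 : ℂ))⁻¹) :=
  stmt18_general hd A hherm hsq hac ψ hψ B hB
end

section
/- Let A₁, ..., Aₙ be pairwise anticommuting observables on a finite-dimensional Hilbert space H of dimension d (Hermitian, Aᵢ² = Id, and AᵢAⱼ = −AⱼAᵢ for all i ≠ j), with n ≥ 2. Then d is a multiple of 2^{⌊n/2⌋}. -/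
open Matrix

section Stmt19Aux

variable {R : Type*} [Ring R]

private lemma stmt19_anticomm_mul_left {x c m : R}
    (h1 : x * c = -(c * x)) (h2 : x * m = m * x) :
    x * (c * m) = -((c * m) * x) := by
  calc x * (c * m) = (x * c) * m := (mul_assoc _ _ _).symm
    _ = -(c * (x * m)) := by rw [h1, neg_mul, mul_assoc]
    _ = -((c * m) * x) := by rw [h2, mul_assoc]

private lemma stmt19_comm_of_anticomm₂ {x c e : R}
    (h1 : x * c = -(c * x)) (h2 : x * e = -(e * x)) :
    x * (c * e) = (c * e) * x := by
  calc x * (c * e) = (x * c) * e := (mul_assoc _ _ _).symm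
    _ = -(c * (x * e)) := by rw [h1, neg_mul, mul_assoc]
    _ = c * (e * x) := by rw [h2, mul_neg, neg_neg]
    _ = (c * e) * x := (mul_assoc _ _ _).symm

private lemma stmt19_mul_comm_of_comm {a b y : R}
    (ha : a * y = y * a) (hb : b * y = y * b) : (a * b) * y = y * (a * b) := by
  calc (a * b) * y = a * (b * y) := mul_assoc _ _ _
    _ = (a * y) * b := by rw [hb, mul_assoc]
    _ = y * (a * b) := by rw [ha, mul_assoc]

private lemma stmt19_trace_zero {d : ℕ} {M C : Matrix (Fin d) (Fin d) ℂ}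
    (hC : C * C = 1) (h : C * M = -(M * C)) : M.trace = 0 := by
  have e1 : M.trace = -M.trace := by
    calc M.trace = ((C * C) * M).trace := by rw [hC, one_mul]
      _ = ((C * M) * C).trace := by rw [mul_assoc, trace_mul_comm]
      _ = -((M * C) * C).trace := by rw [h, neg_mul, trace_neg]
      _ = -M.trace := by rw [mul_assoc, hC, mul_one]
  have e2 : (2 : ℂ) * M.trace = 0 := by linear_combination e1
  rcases mul_eq_zero.mp e2 with h' | h'
  · exact absurd h' two_ne_zero
  · exact h'

end Stmt19Aux

/-- `n ≥ 2` pairwise anticommuting observables on a nontrivial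
`d`-dimensional Hilbert space force `d` to be a multiple of `2^{⌊n/2⌋}`; in
particular `d ≥ 2^{⌊n/2⌋}`. -/
theorem stmt19 {n d : ℕ} (hn : 2 ≤ n) (hd : 0 < d)
    (A : Fin n → Matrix (Fin d) (Fin d) ℂ)
    (hherm : ∀ i, (A i).IsHermitian) (hsq : ∀ i, A i * A i = 1)
    (hac : ∀ i j, i ≠ j → A i * A j = -(A j * A i)) :
    2 ^ (n / 2) ∣ d ∧ 2 ^ (n / 2) ≤ d := by
  classical
  set m := n / 2 with hm
  -- extend A to all of ℕ
  set A' : ℕ → Matrix (Fin d) (Fin d) ℂ :=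
    fun i => if h : i < n then A ⟨i, h⟩ else 1 with hA'
  have hsq' : ∀ i, i < n → A' i * A' i = 1 := by
    intro i hi; simp only [hA', dif_pos hi]; exact hsq _
  have hac' : ∀ i j, i < n → j < n → i ≠ j → A' i * A' j = -(A' j * A' i) := by
    intro i j hi hj hij
    simp only [hA', dif_pos hi, dif_pos hj]
    exact hac _ _ (by simpa [Fin.ext_iff] using hij)
  -- the commuting involutions
  set B : ℕ → Matrix (Fin d) (Fin d) ℂ :=
    fun k => Complex.I • (A' (2 * k) * A' (2 * k + 1)) with hB
  have hlt : ∀ k, k < m → 2 * k < n ∧ 2 * k + 1 < n := by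
    intro k hk; omega
  -- B k squares to one
  have hB2 : ∀ k, k < m → B k * B k = 1 := by
    intro k hk
    obtain ⟨h1, h2⟩ := hlt k hk
    set a := A' (2 * k); set b := A' (2 * k + 1)
    have hba : b * a = -(a * b) := hac' _ _ h2 h1 (by omega)
    have hX : (a * b) * (a * b) = -1 := by
      calc (a * b) * (a * b) = a * ((b * a) * b) := by noncomm_ring
        _ = a * ((-(a * b)) * b) := by rw [hba]
        _ = -((a * a) * (b * b)) := by noncomm_ring
        _ = -1 := by rw [hsq' _ h1, hsq' _ h2, one_mul]
    calc B k * B k = (Complex.I * Complex.I) • ((a * b) * (a * b)) := by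
          rw [hB]; rw [smul_mul_assoc, mul_smul_comm, smul_smul]
      _ = 1 := by rw [hX, Complex.I_mul_I]; simp
  -- distinct B's commute
  have hBB : ∀ j k, j < m → k < m → j ≠ k → B j * B k = B k * B j := by
    intro j k hj hk hjk
    obtain ⟨hj1, hj2⟩ := hlt j hj
    obtain ⟨hk1, hk2⟩ := hlt k hk
    set a := A' (2 * j); set b := A' (2 * j + 1)
    set c := A' (2 * k); set e := A' (2 * k + 1)
    have hac1 : a * (c * e) = (c * e) * a :=
      stmt19_comm_of_anticomm₂ (hac' _ _ hj1 hk1 (by omega)) (hac' _ _ hj1 hk2 (by omega))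
    have hbc1 : b * (c * e) = (c * e) * b :=
      stmt19_comm_of_anticomm₂ (hac' _ _ hj2 hk1 (by omega)) (hac' _ _ hj2 hk2 (by omega))
    have hXY : (a * b) * (c * e) = (c * e) * (a * b) :=
      stmt19_mul_comm_of_comm hac1 hbc1
    show (Complex.I • (a * b)) * (Complex.I • (c * e))
        = (Complex.I • (c * e)) * (Complex.I • (a * b))
    rw [smul_mul_assoc, mul_smul_comm, smul_smul, smul_mul_assoc, mul_smul_comm,
      smul_smul, hXY]
  -- A' (2j) commutes with B k for k ≠ j
  have hCBc : ∀ j k, j < m → k < m → j ≠ k → A' (2 * j) * B k = B k * A' (2 * j) := by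
    intro j k hj hk hjk
    obtain ⟨hj1, _⟩ := hlt j hj
    obtain ⟨hk1, hk2⟩ := hlt k hk
    show A' (2 * j) * (Complex.I • _) = (Complex.I • _) * A' (2 * j)
    rw [mul_smul_comm, smul_mul_assoc]
    congr 1
    exact stmt19_comm_of_anticomm₂ (hac' _ _ hj1 hk1 (by omega)) (hac' _ _ hj1 hk2 (by omega))
  -- A' (2j) anticommutes with B j
  have hCBa : ∀ j, j < m → A' (2 * j) * B j = -(B j * A' (2 * j)) := by
    intro j hj
    obtain ⟨h1, h2⟩ := hlt j hj
    set a := A' (2 * j); set b := A' (2 * j + 1)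
    have hba : b * a = -(a * b) := hac' _ _ h2 h1 (by omega)
    have hX : a * (a * b) = -((a * b) * a) := by
      calc a * (a * b) = (a * a) * b := (mul_assoc _ _ _).symm
        _ = -((a * a) * -b) := by noncomm_ring
        _ = -(a * (b * a)) := by rw [hba]; noncomm_ring
        _ = -((a * b) * a) := by rw [mul_assoc]
    show a * (Complex.I • (a * b)) = -((Complex.I • (a * b)) * a)
    rw [mul_smul_comm, smul_mul_assoc, hX, smul_neg]
  -- products of (1 + B k)
  set Q : ℕ → Matrix (Fin d) (Fin d) ℂ :=
    fun t => ((List.range t).map fun k => 1 + B k).prod with hQdef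
  have hQsucc : ∀ t, Q (t + 1) = Q t * (1 + B t) := by
    intro t; rw [hQdef]; exact List.prod_range_succ _ _
  have hQ0 : Q 0 = 1 := by simp [hQdef]
  -- commuting with products
  have hcomm_prod : ∀ (x : Matrix (Fin d) (Fin d) ℂ) (t : ℕ),
      (∀ k, k < t → x * B k = B k * x) → x * Q t = Q t * x := by
    intro x t
    induction t with
    | zero => intro _; rw [hQ0, one_mul, mul_one]
    | succ t ih =>
      intro h
      have h1 : x * (1 + B t) = (1 + B t) * x := by
        rw [mul_add, add_mul, mul_one, one_mul, h t (Nat.lt_succ_self t)]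
      have h2 : x * Q t = Q t * x := ih fun k hk => h k (Nat.lt_succ_of_lt hk)
      calc x * Q (t + 1) = (x * Q t) * (1 + B t) := by rw [hQsucc, mul_assoc]
        _ = Q t * (x * (1 + B t)) := by rw [h2, mul_assoc]
        _ = (Q t * (1 + B t)) * x := by rw [h1, mul_assoc]
        _ = Q (t + 1) * x := by rw [hQsucc]
  -- key induction: trace and square of partial products
  have key : ∀ t, t ≤ m → (Q t).trace = (d : ℂ) ∧
      Q t * Q t = ((2 : ℂ) ^ t) • Q t := by
    intro t
    induction t with
    | zero => intro _; constructor
              · rw [hQ0]; simp [Matrix.trace_one]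
              · rw [hQ0]; simp
    | succ t ih =>
      intro ht
      have htm : t < m := ht
      obtain ⟨ihtr, ihsq⟩ := ih (Nat.le_of_lt htm)
      -- A' (2t) commutes with Q t
      have hCP : A' (2 * t) * Q t = Q t * A' (2 * t) := by
        apply hcomm_prod
        intro k hk
        exact hCBc t k htm (lt_trans hk htm) (by omega)
      -- B t commutes with Q t
      have hBP : B t * Q t = Q t * B t := by
        apply hcomm_prod
        intro k hk
        exact hBB t k htm (lt_trans hk htm) (by omega)
      -- (1 + B t) commutes with Q t
      have h1P : (1 + B t) * Q t = Q t * (1 + B t) := by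
        rw [add_mul, mul_add, one_mul, mul_one, hBP]
      rw [hQsucc]
      constructor
      · -- trace
        have htr0 : (Q t * B t).trace = 0 := by
          apply stmt19_trace_zero (C := A' (2 * t)) (hsq' _ (hlt t htm).1)
          calc A' (2 * t) * (Q t * B t) = (A' (2 * t) * Q t) * B t := (mul_assoc _ _ _).symm
            _ = Q t * (A' (2 * t) * B t) := by rw [hCP, mul_assoc]
            _ = -((Q t * B t) * A' (2 * t)) := by rw [hCBa t htm, mul_neg, mul_assoc]
        calc (Q t * (1 + B t)).trace = (Q t + Q t * B t).trace := by rw [mul_add, mul_one]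
          _ = (Q t).trace + (Q t * B t).trace := trace_add _ _
          _ = (d : ℂ) := by rw [ihtr, htr0, add_zero]
      · -- square
        have hsq1 : (1 + B t) * (1 + B t) = (2 : ℂ) • (1 + B t) := by
          have h' : (1 + B t) * (1 + B t) = 1 + B t + B t + B t * B t := by noncomm_ring
          rw [h', hB2 t htm, two_smul]
          abel
        calc (Q t * (1 + B t)) * (Q t * (1 + B t))
            = Q t * (((1 + B t) * Q t) * (1 + B t)) := by noncomm_ring
          _ = (Q t * Q t) * ((1 + B t) * (1 + B t)) := by rw [h1P]; noncomm_ring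
          _ = (((2 : ℂ) ^ t) • Q t) * ((2 : ℂ) • (1 + B t)) := by rw [hsq1, ihsq]
          _ = (((2 : ℂ) ^ t) * 2) • (Q t * (1 + B t)) := by
              rw [smul_mul_assoc, mul_smul_comm, smul_smul]
          _ = ((2 : ℂ) ^ (t + 1)) • (Q t * (1 + B t)) := by rw [pow_succ]
  obtain ⟨hQtr, hQsq⟩ := key m (le_refl _)
  have h2m : ((2 : ℂ) ^ m) ≠ 0 := pow_ne_zero _ two_ne_zero
  set P := ((2 : ℂ) ^ m)⁻¹ • (Q m) with hPdef
  have hPP : P * P = P := by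
    rw [hPdef, smul_mul_assoc, mul_smul_comm, smul_smul, hQsq, smul_smul]
    congr 1
    field_simp
  -- the associated projection
  have hidem : Matrix.toLin' P ∘ₗ Matrix.toLin' P = Matrix.toLin' P := by
    rw [← Matrix.toLin'_mul, hPP]
  obtain ⟨p, hproj⟩ := (LinearMap.isProj_iff_isIdempotentElem (Matrix.toLin' P)).mpr hidem
  have htr : LinearMap.trace ℂ (Fin d → ℂ) (Matrix.toLin' P)
      = (Module.finrank ℂ p : ℂ) := hproj.trace
  have htoM : LinearMap.trace ℂ (Fin d → ℂ) (Matrix.toLin' P) = P.trace := by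
    rw [LinearMap.trace_eq_matrix_trace ℂ (Pi.basisFun ℂ (Fin d))]
    rw [LinearMap.toMatrix_eq_toMatrix', LinearMap.toMatrix'_toLin']
  set r := Module.finrank ℂ p with hr
  have hPtr : P.trace = ((2 : ℂ) ^ m)⁻¹ * d := by
    rw [hPdef, trace_smul, hQtr, smul_eq_mul]
  have hcast : (d : ℂ) = ((2 ^ m * r : ℕ) : ℂ) := by
    push_cast
    have : ((2 : ℂ) ^ m)⁻¹ * d = (r : ℂ) := by rw [← hPtr, ← htoM, htr]
    field_simp at this
    linear_combination this
  have hdr : d = 2 ^ m * r := Nat.cast_injective hcast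
  have hrpos : 1 ≤ r := by
    rcases Nat.eq_zero_or_pos r with h0 | h1
    · rw [h0, mul_zero] at hdr; omega
    · exact h1
  constructor
  · exact ⟨r, hdr⟩
  · calc 2 ^ (n / 2) = 2 ^ m * 1 := by rw [mul_one]
      _ ≤ 2 ^ m * r := Nat.mul_le_mul_left _ hrpos
      _ = d := hdr.symm
end
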